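/- Let s, t ≥ 1 be integers and let R = {−2^i : 0 ≤ i ≤ t} ∪ {2^j : 0 ≤ j ≤ s} ⊆ ℤ (i.e., the recovery set consists of all negative and positive powers of two up to 2^t and 2^s respectively, including ±1). Then for every q ≥ 2, the supremum of R_q(X) over all R-recoverable systems X over alphabets of size q equals 2/3. -/

import Mathlib

/-- An `R`-recoverable system on `ℤ`: every symbol `x_i` is a function of the
symbols in positions `i + R`. -/
def IsRecoverable {Q : Type*} (R : Set ℤ) (X : Set (ℤ → Q)) : Prop :=
  ∀ i : ℤ, ∃ f : (ℤ → Q) → Q,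
    (∀ x y : ℤ → Q, (∀ j ∈ R, x (i + j) = y (i + j)) → f x = f y) ∧
    ∀ x ∈ X, f x = x i

/-- `|B_n(X)|`: the number of restrictions of elements of `X` to `{0, …, n−1}`. -/
noncomputable def blockCount {Q : Type*} (X : Set (ℤ → Q)) (n : ℕ) : ℕ :=
  Nat.card ↥((fun x : ℤ → Q => fun i : Fin n => x ((i : ℕ) : ℤ)) '' X)

/-- The rate `R_q(X) = limsup_{n→∞} (1/n) log_q |B_n(X)|`. -/
noncomputable def rate (q : ℕ) {Q : Type*} (X : Set (ℤ → Q)) : ℝ :=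
  Filter.limsup (fun n : ℕ => Real.logb q (blockCount X n) / n) Filter.atTop

/-!
No element of `R` is divisible by `3`, so in an `R`-recoverable system every symbol at a
multiple of `3` is a function of symbols at non-multiples of `3`. Away from the two ends of a
window of length `n` this determines the whole block from about `2n/3` of its symbols, which
gives rate at most `2/3`. Conversely, over `ZMod q` the constraints
`x (3k) = x (3k - 1) + x (3k + 1)` define a system that is recoverable from the offsets
`±1, ±2` and leaves the symbols off the multiples of `3` free, so it has rate exactly `2/3`.
-/

open Filter Finset Topology

section Counting

lemma card_filter_dvd_range_le (m n : ℕ) : #{i ∈ range n | m ∣ i} ≤ n / m + 1 :=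
  calc #{i ∈ range n | m ∣ i} ≤ #(insert 0 {i ∈ Ioc 0 n | m ∣ i}) := by
        refine card_le_card fun i hi => ?_
        simp only [mem_filter, mem_range, mem_insert, mem_Ioc] at hi ⊢
        omega
    _ ≤ n / m + 1 := (card_insert_le _ _).trans (by rw [Nat.Ioc_filter_dvd_card_eq_div])

lemma div_le_card_filter_dvd_range_add_one (m n : ℕ) : n / m ≤ #{i ∈ range n | m ∣ i} + 1 :=
  calc n / m = #{i ∈ Ioc 0 n | m ∣ i} := (Nat.Ioc_filter_dvd_card_eq_div n m).symm
    _ ≤ #(insert n {i ∈ range n | m ∣ i}) := by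
        refine card_le_card fun i hi => ?_
        simp only [mem_filter, mem_range, mem_insert, mem_Ioc] at hi ⊢
        omega
    _ ≤ _ := card_insert_le _ _

lemma card_filter_dvd_add_card_filter_not_dvd_range (m n : ℕ) :
    (#{i ∈ range n | m ∣ i} : ℝ) + #{i ∈ range n | ¬ m ∣ i} = n := by
  exact_mod_cast (card_filter_add_card_filter_not (fun i => m ∣ i)).trans (card_range n)

lemma card_filter_not_dvd_range_le (m n : ℕ) :
    (#{i ∈ range n | ¬ m ∣ i} : ℝ) ≤ (1 - 1 / m) * n + 2 := by
  have hsum := card_filter_dvd_add_card_filter_not_dvd_range m n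
  have hdvd : ((n / m : ℕ) : ℝ) ≤ #{i ∈ range n | m ∣ i} + 1 := by
    exact_mod_cast div_le_card_filter_dvd_range_add_one m n
  have hfloor : (n : ℝ) / m - 1 < (n / m : ℕ) := by
    simpa only [Nat.floor_div_eq_div] using Nat.sub_one_lt_floor ((n : ℝ) / m)
  have : (1 - 1 / (m : ℝ)) * n = n - n / m := by ring
  linarith

lemma le_card_filter_not_dvd_range (m n : ℕ) :
    (1 - 1 / m) * n - 1 ≤ (#{i ∈ range n | ¬ m ∣ i} : ℝ) := by
  have hsum := card_filter_dvd_add_card_filter_not_dvd_range m n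
  have hdvd : (#{i ∈ range n | m ∣ i} : ℝ) ≤ (n / m : ℕ) + 1 := by
    exact_mod_cast card_filter_dvd_range_le m n
  have hfloor : ((n / m : ℕ) : ℝ) ≤ n / m := Nat.cast_div_le
  have : (1 - 1 / (m : ℝ)) * n = n - n / m := by ring
  linarith

end Counting

lemma Real.logb_natCast_le_of_le_pow {q k e : ℕ} (h : k ≤ q ^ e) : Real.logb q k ≤ e :=
  calc Real.logb q k ≤ ⌈Real.logb q k⌉₊ := Nat.le_ceil _
    _ = Nat.clog q k := by rw [Real.natCeil_logb_natCast]
    _ ≤ e := by exact_mod_cast Nat.clog_le_of_le_pow h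

lemma Real.le_logb_natCast_of_pow_le {q k e : ℕ} (hq : 1 < q) (h : q ^ e ≤ k) :
    (e : ℝ) ≤ Real.logb q k :=
  (Nat.cast_le.mpr (Nat.le_log_of_pow_le hq h)).trans (Real.natLog_le_logb _ _)

lemma tendsto_div_natCast_of_sub_le_of_le_add {f : ℕ → ℝ} {a c : ℝ}
    (hl : ∀ n, a * n - c ≤ f n) (hu : ∀ n, f n ≤ a * n + c) :
    Tendsto (fun n : ℕ => f n / n) atTop (𝓝 a) := by
  have hc : Tendsto (fun n : ℕ => c / n) atTop (𝓝 0) :=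
    tendsto_const_nhds.div_atTop tendsto_natCast_atTop_atTop
  refine tendsto_of_tendsto_of_tendsto_of_le_of_le' (by simpa using hc.const_sub a)
    (by simpa using hc.const_add a) ?_ ?_
  all_goals
    filter_upwards [eventually_gt_atTop 0] with n hn
    have hn : (0 : ℝ) < n := by exact_mod_cast hn
  · rw [le_div_iff₀ hn, sub_mul, div_mul_cancel₀ _ hn.ne']
    linarith [hl n]
  · rw [div_le_iff₀ hn, add_mul, div_mul_cancel₀ _ hn.ne']
    linarith [hu n]

lemma limsup_div_natCast_le {f : ℕ → ℝ} {a c : ℝ} (hf : ∀ n, 0 ≤ f n)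
    (hu : ∀ n, f n ≤ a * n + c) : limsup (fun n : ℕ => f n / n) atTop ≤ a := by
  have hc : 0 ≤ c := by simpa using (hf 0).trans (hu 0)
  have hbound := tendsto_div_natCast_of_sub_le_of_le_add (fun n => by linarith)
    (fun n => le_refl (a * n + c))
  calc limsup (fun n : ℕ => f n / n) atTop ≤ limsup (fun n : ℕ => (a * n + c) / n) atTop :=
        limsup_le_limsup
          (Eventually.of_forall fun n => div_le_div_of_nonneg_right (hu n) n.cast_nonneg)
          (isBoundedUnder_of ⟨0, fun n => div_nonneg (hf n) n.cast_nonneg⟩).isCoboundedUnder_le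
          hbound.isBoundedUnder_le
    _ = a := hbound.limsup_eq

lemma IsRecoverable.eq_of_forall_add_eq {Q : Type*} {R : Set ℤ} {X : Set (ℤ → Q)}
    (hX : IsRecoverable R X) {x y : ℤ → Q} (hx : x ∈ X) (hy : y ∈ X) {i : ℤ}
    (h : ∀ j ∈ R, x (i + j) = y (i + j)) : x i = y i := by
  obtain ⟨f, hf, hfX⟩ := hX i
  rw [← hfX x hx, ← hfX y hy, hf x y h]

lemma isRecoverable_of_forall_exists_binary {Q : Type*} {R : Set ℤ} {X : Set (ℤ → Q)}
    (h : ∀ i, ∃ j₁ ∈ R, ∃ j₂ ∈ R, ∃ g : Q → Q → Q,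
      ∀ x ∈ X, x i = g (x (i + j₁)) (x (i + j₂))) :
    IsRecoverable R X := by
  intro i
  obtain ⟨j₁, hj₁, j₂, hj₂, g, hg⟩ := h i
  exact ⟨fun x => g (x (i + j₁)) (x (i + j₂)),
    fun x y hxy => congrArg₂ g (hxy j₁ hj₁) (hxy j₂ hj₂), fun x hx => (hg x hx).symm⟩

section Blocks

variable {Q : Type*} {X : Set (ℤ → Q)} {n : ℕ} {T : Finset ℕ}

def blocks (X : Set (ℤ → Q)) (n : ℕ) : Set (Fin n → Q) :=
  (fun x : ℤ → Q => fun i : Fin n => x ((i : ℕ) : ℤ)) '' X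

def blockRestrict (hT : T ⊆ range n) (b : Fin n → Q) (i : T) : Q :=
  b ⟨i, mem_range.mp (hT i.2)⟩

variable [Fintype Q]

lemma blockCount_le_card_pow (hT : T ⊆ range n)
    (h : ∀ x ∈ X, ∀ y ∈ X, (∀ i ∈ T, x i = y i) → ∀ i < n, x i = y i) :
    blockCount X n ≤ Fintype.card Q ^ #T := by
  have hinj : Set.InjOn (blockRestrict hT) (blocks X n) := by
    rintro _ ⟨x, hx, rfl⟩ _ ⟨y, hy, rfl⟩ hxy
    funext i
    exact h x hx y hy (fun k hk => congrFun hxy ⟨k, hk⟩) i i.2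
  calc blockCount X n = Nat.card (blockRestrict hT '' blocks X n) :=
        (Nat.card_image_of_injOn hinj).symm
    _ ≤ Nat.card (T → Q) := Finite.card_subtype_le _
    _ = Fintype.card Q ^ #T := by simp

lemma card_pow_le_blockCount [Nonempty Q] (hT : T ⊆ range n)
    (h : ∀ v : ℤ → Q, ∃ x ∈ X, ∀ i ∈ T, x i = v i) :
    Fintype.card Q ^ #T ≤ blockCount X n := by
  have hsurj : blockRestrict hT '' blocks X n = Set.univ := by
    refine Set.eq_univ_of_forall fun u => ?_
    let v : ℤ → Q := Function.extend (fun i : T => ((i : ℕ) : ℤ)) u (Classical.arbitrary _)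
    have hv : ∀ i : T, v i = u i :=
      (Nat.cast_injective.comp Subtype.val_injective).extend_apply _ _
    obtain ⟨x, hx, hxv⟩ := h v
    exact ⟨_, ⟨x, hx, rfl⟩, funext fun i => (hxv i i.2).trans (hv i)⟩
  calc Fintype.card Q ^ #T = Nat.card (blockRestrict hT '' blocks X n) := by simp [hsurj]
    _ ≤ blockCount X n := Nat.card_image_le (Set.toFinite _)

end Blocks

lemma rate_le_of_logb_blockCount_le {q : ℕ} {Q : Type*} {X : Set (ℤ → Q)} {a c : ℝ}
    (h : ∀ n, Real.logb q (blockCount X n) ≤ a * n + c) : rate q X ≤ a :=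
  limsup_div_natCast_le (fun _ => (Nat.cast_nonneg _).trans (Real.natLog_le_logb _ _)) h

lemma rate_eq_of_logb_blockCount_bounds {q : ℕ} {Q : Type*} {X : Set (ℤ → Q)} {a c : ℝ}
    (hl : ∀ n, a * n - c ≤ Real.logb q (blockCount X n))
    (hu : ∀ n, Real.logb q (blockCount X n) ≤ a * n + c) : rate q X = a :=
  (tendsto_div_natCast_of_sub_le_of_le_add hl hu).limsup_eq

section NotDvd

variable {Q : Type*} {R : Set ℤ} {X : Set (ℤ → Q)} {m M : ℕ}

def determiningPositions (m M n : ℕ) : Finset ℕ :=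
  {i ∈ range n | ¬ m ∣ i ∨ i < M ∨ n ≤ i + M}

lemma card_determiningPositions_le (m M n : ℕ) :
    (#(determiningPositions m M n) : ℝ) ≤ (1 - 1 / m) * n + (2 * M + 2) := by
  have hlow : #{i ∈ range n | i < M} ≤ M :=
    (card_le_card (t := range M) fun i => by simp only [mem_filter, mem_range]; omega).trans
      (card_range M).le
  have hhigh : #{i ∈ range n | n ≤ i + M} ≤ M :=
    (card_le_card (t := Ico (n - M) n) fun i => by
      simp only [mem_filter, mem_range, mem_Ico]; omega).trans (by simp; omega)
  have hcard : #(determiningPositions m M n) ≤ #{i ∈ range n | ¬ m ∣ i} + M + M := by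
    rw [determiningPositions, filter_or, filter_or]
    grind [card_union_le]
  have hcard' : (#(determiningPositions m M n) : ℝ) ≤ #{i ∈ range n | ¬ m ∣ i} + M + M := by
    exact_mod_cast hcard
  linarith [card_filter_not_dvd_range_le m n]

lemma IsRecoverable.eqOn_range_of_eqOn_determiningPositions (hR : ∀ j ∈ R, ¬ (m : ℤ) ∣ j ∧ |j| ≤ M)
    (hX : IsRecoverable R X) {n : ℕ} {x y : ℤ → Q} (hx : x ∈ X) (hy : y ∈ X)
    (h : ∀ i ∈ determiningPositions m M n, x i = y i) : ∀ i < n, x i = y i := by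
  intro i hi
  by_cases hdet : ¬ m ∣ i ∨ i < M ∨ n ≤ i + M
  · exact h i (mem_filter.mpr ⟨mem_range.mpr hi, hdet⟩)
  push Not at hdet
  obtain ⟨hmi, hMi, hiM⟩ := hdet
  refine hX.eq_of_forall_add_eq hx hy fun j hj => ?_
  obtain ⟨hmj, hjM⟩ := hR j hj
  obtain ⟨hjM₁, hjM₂⟩ := abs_le.mp hjM
  obtain ⟨k, hk⟩ : ∃ k : ℕ, (i : ℤ) + j = k := Int.eq_ofNat_of_zero_le (by omega)
  have hmk : ¬ m ∣ k := fun hmk => hmj <| by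
    have := dvd_sub (Int.natCast_dvd_natCast.mpr hmk) (Int.natCast_dvd_natCast.mpr hmi)
    rwa [← hk, add_sub_cancel_left] at this
  rw [hk]
  exact h k (mem_filter.mpr ⟨mem_range.mpr (by omega), Or.inl hmk⟩)

variable [Fintype Q]

lemma logb_blockCount_le_of_not_dvd (hR : ∀ j ∈ R, ¬ (m : ℤ) ∣ j ∧ |j| ≤ M)
    (hX : IsRecoverable R X) (n : ℕ) :
    Real.logb (Fintype.card Q) (blockCount X n) ≤ (1 - 1 / m) * n + (2 * M + 2) :=
  calc Real.logb (Fintype.card Q) (blockCount X n) ≤ #(determiningPositions m M n) :=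
        Real.logb_natCast_le_of_le_pow <| blockCount_le_card_pow (filter_subset _ _)
          fun _ hx _ hy => hX.eqOn_range_of_eqOn_determiningPositions hR hx hy
    _ ≤ _ := card_determiningPositions_le m M n

theorem rate_le_of_not_dvd (hR : ∀ j ∈ R, ¬ (m : ℤ) ∣ j ∧ |j| ≤ M)
    (hX : IsRecoverable R X) : rate (Fintype.card Q) X ≤ 1 - 1 / m :=
  rate_le_of_logb_blockCount_le (logb_blockCount_le_of_not_dvd hR hX)

end NotDvd

section CenterSum

variable (G : Type*) [AddCommGroup G]

def centerSumSystem : Set (ℤ → G) :=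
  {x | ∀ k, x (3 * k) = x (3 * k - 1) + x (3 * k + 1)}

variable {G}

lemma isRecoverable_centerSumSystem {R : Set ℤ} (hR : ({-2, -1, 1, 2} : Set ℤ) ⊆ R) :
    IsRecoverable R (centerSumSystem G) := by
  have hm2 : (-2 : ℤ) ∈ R := hR (by simp)
  have hm1 : (-1 : ℤ) ∈ R := hR (by simp)
  have h1 : (1 : ℤ) ∈ R := hR (by simp)
  have h2 : (2 : ℤ) ∈ R := hR (by simp)
  refine isRecoverable_of_forall_exists_binary fun i => ?_
  obtain ⟨k, rfl | rfl | rfl⟩ : ∃ k, i = 3 * k ∨ i = 3 * k + 1 ∨ i = 3 * k + 2 :=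
    ⟨i / 3, by omega⟩
  · refine ⟨-1, hm1, 1, h1, (· + ·), fun x hx => ?_⟩
    rw [hx k, ← sub_eq_add_neg]
  · refine ⟨-1, hm1, -2, hm2, (· - ·), fun x hx => ?_⟩
    rw [show 3 * k + 1 + -1 = 3 * k by ring, show 3 * k + 1 + -2 = 3 * k - 1 by ring, hx k]
    exact (add_sub_cancel_left _ _).symm
  · refine ⟨1, h1, 2, h2, (· - ·), fun x hx => ?_⟩
    rw [show 3 * k + 2 + 1 = 3 * (k + 1) by ring, show 3 * k + 2 + 2 = 3 * (k + 1) + 1 by ring,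
      hx (k + 1), show 3 * (k + 1) - 1 = 3 * k + 2 by ring]
    exact (add_sub_cancel_right _ _).symm

lemma exists_mem_centerSumSystem_eq (v : ℤ → G) :
    ∃ x ∈ centerSumSystem G, ∀ i, ¬ 3 ∣ i → x i = v i := by
  refine ⟨fun i => if 3 ∣ i then v (i - 1) + v (i + 1) else v i, fun k => ?_,
    fun i hi => if_neg hi⟩
  simp only [dvd_mul_right, if_true]
  rw [if_neg (by omega), if_neg (by omega)]

variable [Fintype G] [Nontrivial G]

lemma le_logb_blockCount_centerSumSystem (n : ℕ) :
    2 / 3 * n - 1 ≤ Real.logb (Fintype.card G) (blockCount (centerSumSystem G) n) :=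
  calc 2 / 3 * (n : ℝ) - 1 = (1 - 1 / (3 : ℕ)) * n - 1 := by norm_num
    _ ≤ #{i ∈ range n | ¬ 3 ∣ i} := le_card_filter_not_dvd_range 3 n
    _ ≤ _ := Real.le_logb_natCast_of_pow_le Fintype.one_lt_card <|
        card_pow_le_blockCount (filter_subset _ _) fun v => by
          obtain ⟨x, hx, hxv⟩ := exists_mem_centerSumSystem_eq v
          exact ⟨x, hx, fun i hi => hxv i fun h3 => (mem_filter.mp hi).2 (by exact_mod_cast h3)⟩

theorem rate_centerSumSystem : rate (Fintype.card G) (centerSumSystem G) = 2 / 3 := by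
  have hR : ∀ j ∈ ({-2, -1, 1, 2} : Set ℤ), ¬ ((3 : ℕ) : ℤ) ∣ j ∧ |j| ≤ (2 : ℕ) := by
    rintro j (rfl | rfl | rfl | rfl) <;> decide
  refine rate_eq_of_logb_blockCount_bounds (c := 6) (fun n => ?_) fun n => ?_
  · linarith [le_logb_blockCount_centerSumSystem (G := G) n]
  · have := logb_blockCount_le_of_not_dvd hR (isRecoverable_centerSumSystem (G := G) le_rfl) n
    norm_num at this ⊢
    linarith

end CenterSum

def signedPowTwoSet (s t : ℕ) : Set ℤ :=
  {j : ℤ | (∃ i ≤ t, j = -(2 ^ i : ℤ)) ∨ (∃ i ≤ s, j = (2 ^ i : ℤ))}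

lemma not_three_dvd_and_abs_le_of_mem_signedPowTwoSet {s t : ℕ} :
    ∀ j ∈ signedPowTwoSet s t, ¬ ((3 : ℕ) : ℤ) ∣ j ∧ |j| ≤ (2 ^ max s t : ℕ) := by
  have h3 (i : ℕ) : ¬ ((3 : ℕ) : ℤ) ∣ 2 ^ i := fun h =>
    absurd (Nat.prime_three.dvd_of_dvd_pow (by exact_mod_cast h)) (by norm_num)
  have hle {i : ℕ} (h : i ≤ max s t) : |(2 : ℤ) ^ i| ≤ (2 ^ max s t : ℕ) := by
    rw [abs_of_pos (by positivity)]
    push_cast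
    exact pow_le_pow_right₀ (by norm_num) h
  rintro j (⟨i, hi, rfl⟩ | ⟨i, hi, rfl⟩)
  · rw [Int.dvd_neg, abs_neg]
    exact ⟨h3 i, hle (le_max_of_le_right hi)⟩
  · exact ⟨h3 i, hle (le_max_of_le_left hi)⟩

lemma subset_signedPowTwoSet {s t : ℕ} (hs : 1 ≤ s) (ht : 1 ≤ t) :
    ({-2, -1, 1, 2} : Set ℤ) ⊆ signedPowTwoSet s t := by
  rintro j (rfl | rfl | rfl | rfl)
  exacts [Or.inl ⟨1, ht, by norm_num⟩, Or.inl ⟨0, t.zero_le, by norm_num⟩,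
    Or.inr ⟨0, s.zero_le, by norm_num⟩, Or.inr ⟨1, hs, by norm_num⟩]

/-- For `R = {−2^t,…,−4,−2,−1} ∪ {1,2,4,…,2^s}`, the supremum of rates of
`R`-recoverable systems over alphabets of size `q` is `2/3`. -/
theorem stmt10 (s t : ℕ) (hs : 1 ≤ s) (ht : 1 ≤ t) (q : ℕ) (hq : 2 ≤ q) :
    sSup {x : ℝ | ∃ (Q : Type) (_ : Fintype Q), Fintype.card Q = q ∧
        ∃ X : Set (ℤ → Q),
          IsRecoverable
            {j : ℤ | (∃ i ≤ t, j = -(2 ^ i : ℤ)) ∨ (∃ i ≤ s, j = (2 ^ i : ℤ))} X ∧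
          rate q X = x} =
      2 / 3 := by
  have : Fact (1 < q) := ⟨hq⟩
  refine IsGreatest.csSup_eq ⟨⟨ZMod q, inferInstance, ZMod.card q, centerSumSystem _,
    isRecoverable_centerSumSystem (subset_signedPowTwoSet hs ht), ?_⟩, ?_⟩
  · simpa using rate_centerSumSystem (G := ZMod q)
  · rintro _ ⟨Q, _, rfl, X, hX, rfl⟩
    have := rate_le_of_not_dvd not_three_dvd_and_abs_le_of_mem_signedPowTwoSet hX
    norm_num at this
    exact this
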